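/- Let κ ∈ ℝ and a < b be reals, and let u : [a,b] → (0,∞) satisfy the κ-concavity inequality: for all x, y ∈ [a,b] with 0 < y − x (and (y−x)·√κ < π when κ > 0) and all t ∈ [0,1], u((1−t)x + t y) ≥ (sin_κ((1−t)(y−x))/sin_κ(y−x))·u(x) + (sin_κ(t(y−x))/sin_κ(y−x))·u(y). Then u is continuous on the open interval (a,b) and lower semicontinuous on [a,b]. -/
import Mathlib


open Real Set
open Topology Filter

/-- The generalized sine function `sin_κ`. -/
noncomputable def sinK (κ x : ℝ) : ℝ :=
  if κ < 0 then Real.sinh (Real.sqrt (-κ) * x) / Real.sqrt (-κ)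
  else if κ = 0 then x
  else Real.sin (Real.sqrt κ * x) / Real.sqrt κ

/-- `u` satisfies the κ-concavity inequality (`u'' + κ u ≤ 0`) on the set `s`. -/
def KConcIneqOn (κ : ℝ) (u : ℝ → ℝ) (s : Set ℝ) : Prop :=
  ∀ x ∈ s, ∀ y ∈ s, 0 < y - x → (0 < κ → (y - x) * Real.sqrt κ < Real.pi) →
    ∀ t ∈ Set.Icc (0:ℝ) 1,
      u ((1 - t) * x + t * y) ≥
        (sinK κ ((1 - t) * (y - x)) / sinK κ (y - x)) * u x +
        (sinK κ (t * (y - x)) / sinK κ (y - x)) * u y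

lemma sinK_zero (κ : ℝ) : sinK κ 0 = 0 := by
  unfold sinK; split_ifs <;> simp

lemma sinK_pos {κ x : ℝ} (hx : 0 < x) (hπ : 0 < κ → x * Real.sqrt κ < π) :
    0 < sinK κ x := by
  unfold sinK; split_ifs with h1 h2
  · have hs : 0 < Real.sqrt (-κ) := Real.sqrt_pos.mpr (by linarith)
    exact div_pos (Real.sinh_pos_iff.mpr (by positivity)) hs
  · exact hx
  · have hκ : 0 < κ := lt_of_le_of_ne (not_lt.mp h1) (Ne.symm h2)
    have hs : 0 < Real.sqrt κ := Real.sqrt_pos.mpr hκ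
    exact div_pos (Real.sin_pos_of_pos_of_lt_pi (by positivity)
      (by rw [mul_comm]; exact hπ hκ)) hs

lemma sinK_nonneg {κ x : ℝ} (hx : 0 ≤ x) (hπ : 0 < κ → x * Real.sqrt κ < π) :
    0 ≤ sinK κ x := by
  rcases eq_or_lt_of_le hx with h | h
  · rw [← h, sinK_zero]
  · exact (sinK_pos h hπ).le

lemma sinK_continuous (κ : ℝ) : Continuous (sinK κ) := by
  unfold sinK; split_ifs with h1 h2
  · exact (Real.continuous_sinh.comp (continuous_const.mul continuous_id)).div_const _
  · exact continuous_id
  · exact (Real.continuous_sin.comp (continuous_const.mul continuous_id)).div_const _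

lemma bound_right {κ a b : ℝ} {u : ℝ → ℝ} (hpos : ∀ x ∈ Set.Icc a b, 0 < u x)
    (hconc : KConcIneqOn κ u (Set.Icc a b)) {z p : ℝ}
    (hz : z ∈ Set.Icc a b) (hp : p ∈ Set.Icc a b) (hzp : z < p)
    (hπ : 0 < κ → (p - z) * Real.sqrt κ < π) :
    ∀ w ∈ Set.Ico z p, u z * (sinK κ (p - w) / sinK κ (p - z)) ≤ u w := by
  intro w hw
  have hpzpos : 0 < sinK κ (p - z) := sinK_pos (by linarith) hπ
  rcases eq_or_lt_of_le hw.1 with h | h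
  · rw [← h, div_self hpzpos.ne']; simp
  · set t := (w - z) / (p - z) with ht
    have hpz : p - z ≠ 0 := by linarith [hzp]
    have h1 : t * (p - z) = w - z := div_mul_cancel₀ _ hpz
    have h2 : (1 - t) * (p - z) = p - w := by rw [sub_mul, one_mul, h1]; ring
    have hw' : (1 - t) * z + t * p = w := by
      rw [show (1 - t) * z + t * p = z + t * (p - z) from by ring, h1]; ring
    have htm : t ∈ Set.Icc (0:ℝ) 1 := by
      constructor
      · exact le_of_lt (div_pos (by linarith) (by linarith))
      · exact le_of_lt ((div_lt_one (by linarith)).mpr (by linarith [hw.2]))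
    have key := hconc z hz p hp (by linarith) hπ t htm
    rw [hw', h2, h1] at key
    have hs : 0 ≤ Real.sqrt κ := Real.sqrt_nonneg κ
    have hB : 0 ≤ sinK κ (w - z) / sinK κ (p - z) * u p := by
      apply mul_nonneg (div_nonneg (sinK_nonneg (by linarith) ?_) hpzpos.le) (hpos p hp).le
      intro hκ
      have hsp : 0 < Real.sqrt κ := Real.sqrt_pos.mpr hκ
      have := hπ hκ
      nlinarith [hw.2]
    rw [mul_comm]
    linarith

lemma bound_left {κ a b : ℝ} {u : ℝ → ℝ} (hpos : ∀ x ∈ Set.Icc a b, 0 < u x)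
    (hconc : KConcIneqOn κ u (Set.Icc a b)) {z q : ℝ}
    (hz : z ∈ Set.Icc a b) (hq : q ∈ Set.Icc a b) (hqz : q < z)
    (hπ : 0 < κ → (z - q) * Real.sqrt κ < π) :
    ∀ w ∈ Set.Ioc q z, u z * (sinK κ (w - q) / sinK κ (z - q)) ≤ u w := by
  intro w hw
  have hzqpos : 0 < sinK κ (z - q) := sinK_pos (by linarith) hπ
  rcases eq_or_lt_of_le hw.2 with h | h
  · rw [h, div_self hzqpos.ne']; simp
  · set t := (w - q) / (z - q) with ht
    have hzq : z - q ≠ 0 := by linarith [hqz]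
    have h1 : t * (z - q) = w - q := div_mul_cancel₀ _ hzq
    have h2 : (1 - t) * (z - q) = z - w := by rw [sub_mul, one_mul, h1]; ring
    have hw' : (1 - t) * q + t * z = w := by
      rw [show (1 - t) * q + t * z = q + t * (z - q) from by ring, h1]; ring
    have htm : t ∈ Set.Icc (0:ℝ) 1 := by
      constructor
      · exact le_of_lt (div_pos (by linarith [hw.1]) (by linarith))
      · exact le_of_lt ((div_lt_one (by linarith)).mpr (by linarith))
    have key := hconc q hq z hz (by linarith) hπ t htm
    rw [hw', h2, h1] at key
    have hB : 0 ≤ sinK κ (z - w) / sinK κ (z - q) * u q := by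
      apply mul_nonneg (div_nonneg (sinK_nonneg (by linarith) ?_) hzqpos.le) (hpos q hq).le
      intro hκ
      have hsp : 0 < Real.sqrt κ := Real.sqrt_pos.mpr hκ
      have := hπ hκ
      nlinarith [hw.1]
    rw [mul_comm]
    linarith

/-- A positive function satisfying the κ-concavity inequality on `[a,b]` is
continuous on `(a,b)` and lower semicontinuous on `[a,b]`. -/
theorem continuous_and_lsc_of_kConcIneq (κ a b : ℝ) (hab : a < b) (u : ℝ → ℝ)
    (hpos : ∀ x ∈ Set.Icc a b, 0 < u x)
    (hconc : KConcIneqOn κ u (Set.Icc a b)) :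
    ContinuousOn u (Set.Ioo a b) ∧ LowerSemicontinuousOn u (Set.Icc a b) := by
  have hs0 : 0 ≤ Real.sqrt κ := Real.sqrt_nonneg κ
  set d : ℝ := π / (2 * (Real.sqrt κ + 1)) with hd
  have hdpos : 0 < d := div_pos Real.pi_pos (by positivity)
  have hdκ : 0 < κ → 2 * d * Real.sqrt κ < π := by
    intro hκ
    have hsp : 0 < Real.sqrt κ := Real.sqrt_pos.mpr hκ
    have he : 2 * (Real.sqrt κ + 1) * d = π := by
      rw [hd]; field_simp
    nlinarith
  have hdκ' : 0 < κ → d * Real.sqrt κ < π := by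
    intro hκ
    have hsp : 0 < Real.sqrt κ := Real.sqrt_pos.mpr hκ
    nlinarith [hdκ hκ]
  constructor
  · -- continuity on the open interval
    intro z hz
    set δ := min (min ((z - a)/2) ((b - z)/2)) d with hδ
    have hδpos : 0 < δ :=
      lt_min (lt_min (by linarith [hz.1]) (by linarith [hz.2])) hdpos
    have hδd : δ ≤ d := min_le_right _ _
    have hδa : δ ≤ (z - a)/2 := le_trans (min_le_left _ _) (min_le_left _ _)
    have hδb : δ ≤ (b - z)/2 := le_trans (min_le_left _ _) (min_le_right _ _)
    have h2δ : 0 < κ → 2 * δ * Real.sqrt κ < π := by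
      intro hκ
      have hsp : 0 < Real.sqrt κ := Real.sqrt_pos.mpr hκ
      nlinarith [hdκ hκ, mul_le_mul_of_nonneg_right hδd hsp.le]
    have hδπ : 0 < κ → δ * Real.sqrt κ < π := by
      intro hκ
      have hsp : 0 < Real.sqrt κ := Real.sqrt_pos.mpr hκ
      nlinarith [h2δ hκ]
    set q := z - δ with hqdef
    set p := z + δ with hpdef
    have hpz : p - z = δ := by rw [hpdef]; ring
    have hzq : z - q = δ := by rw [hqdef]; ring
    have haq : a < q := by rw [hqdef]; linarith [hz.1]
    have hpb : p < b := by rw [hpdef]; linarith [hz.2]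
    have hqz : q < z := by rw [hqdef]; linarith
    have hzp : z < p := by rw [hpdef]; linarith
    have hzm : z ∈ Set.Icc a b := ⟨hz.1.le, hz.2.le⟩
    have hqm : q ∈ Set.Icc a b := ⟨haq.le, by linarith⟩
    have hpm : p ∈ Set.Icc a b := ⟨by linarith, hpb.le⟩
    have hπp : 0 < κ → (p - z) * Real.sqrt κ < π := by
      intro hκ; rw [hpz]; exact hδπ hκ
    have hπq : 0 < κ → (z - q) * Real.sqrt κ < π := by
      intro hκ; rw [hzq]; exact hδπ hκ
    have hApos : 0 < sinK κ (p - z) := sinK_pos (by linarith) hπp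
    have hBpos : 0 < sinK κ (z - q) := sinK_pos (by linarith) hπq
    set f : ℝ → ℝ := fun w => u z * (sinK κ (p - w) / sinK κ (p - z)) with hf
    set g : ℝ → ℝ := fun w => u z * (sinK κ (w - q) / sinK κ (z - q)) with hg
    have hfc : ContinuousAt f z := by
      apply Continuous.continuousAt
      exact continuous_const.mul
        (((sinK_continuous κ).comp (continuous_const.sub continuous_id)).div_const _)
    have hgc : ContinuousAt g z := by
      apply Continuous.continuousAt
      exact continuous_const.mul
        (((sinK_continuous κ).comp (continuous_id.sub continuous_const)).div_const _)
    have hfz : f z = u z := by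
      rw [hf]; simp only []
      rw [div_self hApos.ne', mul_one]
    have hgz : g z = u z := by
      rw [hg]; simp only []
      rw [div_self hBpos.ne', mul_one]
    have hev : ∀ᶠ w in 𝓝[Set.Ioo a b] z, w ∈ Set.Ioo q p := by
      filter_upwards [nhdsWithin_le_nhds (Ioo_mem_nhds hqz hzp)] with w hw using hw
    have hlow : ∀ᶠ w in 𝓝[Set.Ioo a b] z, min (f w) (g w) ≤ u w := by
      filter_upwards [hev] with w hw
      rcases le_total z w with hzw | hwz
      · exact le_trans (min_le_left _ _)
          (bound_right hpos hconc hzm hpm hzp hπp w ⟨hzw, hw.2⟩)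
      · exact le_trans (min_le_right _ _)
          (bound_left hpos hconc hzm hqm hqz hπq w ⟨hw.1, hwz⟩)
    have hup : ∀ᶠ w in 𝓝[Set.Ioo a b] z, u w ≤ max (f w) (g w) := by
      filter_upwards [hev] with w hw
      have hwm : w ∈ Set.Icc a b := ⟨by linarith [hw.1], by linarith [hw.2]⟩
      rcases le_total z w with hzw | hwz
      · -- u w ≤ g w
        have hqw : q < w := lt_of_lt_of_le hqz hzw
        have hπw : 0 < κ → (w - q) * Real.sqrt κ < π := by
          intro hκ
          have hsp : 0 < Real.sqrt κ := Real.sqrt_pos.mpr hκ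
          have hwq : w - q < 2 * δ := by
            have : p - q = 2 * δ := by rw [hpdef, hqdef]; ring
            linarith [hw.2]
          nlinarith [h2δ hκ]
        have hbl := bound_left hpos hconc hwm hqm hqw hπw z ⟨hqz, hzw⟩
        have hCpos : 0 < sinK κ (w - q) := sinK_pos (by linarith) hπw
        have h1 : u w * sinK κ (z - q) ≤ u z * sinK κ (w - q) := by
          rw [← mul_div_assoc] at hbl
          exact (div_le_iff₀ hCpos).mp hbl
        have h2 : u w ≤ g w := by
          rw [hg]; simp only []
          rw [← mul_div_assoc]
          exact (le_div_iff₀ hBpos).mpr h1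
        exact le_trans h2 (le_max_right _ _)
      · -- u w ≤ f w
        have hwp : w < p := lt_of_le_of_lt hwz hzp
        have hπw : 0 < κ → (p - w) * Real.sqrt κ < π := by
          intro hκ
          have hsp : 0 < Real.sqrt κ := Real.sqrt_pos.mpr hκ
          have hwq : p - w < 2 * δ := by
            have : p - q = 2 * δ := by rw [hpdef, hqdef]; ring
            linarith [hw.1]
          nlinarith [h2δ hκ]
        have hbr := bound_right hpos hconc hwm hpm hwp hπw z ⟨hwz, hzp⟩
        have hCpos : 0 < sinK κ (p - w) := sinK_pos (by linarith) hπw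
        have h1 : u w * sinK κ (p - z) ≤ u z * sinK κ (p - w) := by
          rw [← mul_div_assoc] at hbr
          exact (div_le_iff₀ hCpos).mp hbr
        have h2 : u w ≤ f w := by
          rw [hf]; simp only []
          rw [← mul_div_assoc]
          exact (le_div_iff₀ hApos).mpr h1
        exact le_trans h2 (le_max_left _ _)
    have hminT : Filter.Tendsto (fun w => min (f w) (g w)) (𝓝[Set.Ioo a b] z) (𝓝 (u z)) := by
      have h := (hfc.min hgc).mono_left (nhdsWithin_le_nhds (s := Set.Ioo a b))
      rwa [hfz, hgz, min_self] at h
    have hmaxT : Filter.Tendsto (fun w => max (f w) (g w)) (𝓝[Set.Ioo a b] z) (𝓝 (u z)) := by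
      have h := (hfc.max hgc).mono_left (nhdsWithin_le_nhds (s := Set.Ioo a b))
      rwa [hfz, hgz, max_self] at h
    exact tendsto_of_tendsto_of_tendsto_of_le_of_le' hminT hmaxT hlow hup
  · -- lower semicontinuity
    intro z hz c hc
    have hsplit : 𝓝[Set.Icc a b] z ≤
        𝓝[Set.Icc a b ∩ Set.Iic z] z ⊔ 𝓝[Set.Icc a b ∩ Set.Ici z] z := by
      rw [← nhdsWithin_union]
      apply nhdsWithin_mono
      intro w hw
      rcases le_total w z with h | h
      · exact Or.inl ⟨hw, h⟩
      · exact Or.inr ⟨hw, h⟩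
    apply Filter.Eventually.filter_mono hsplit
    rw [Filter.eventually_sup]
    constructor
    · -- from the left
      rcases eq_or_lt_of_le hz.1 with haz | haz
      · filter_upwards [self_mem_nhdsWithin] with w hw
        have hwz : w = z := le_antisymm hw.2 (haz ▸ hw.1.1)
        rw [hwz]; exact hc
      · set δ := min (z - a) d with hδ
        have hδpos : 0 < δ := lt_min (by linarith) hdpos
        set q := z - δ with hqdef
        have hqz : q < z := by rw [hqdef]; linarith
        have hqm : q ∈ Set.Icc a b := by
          constructor
          · rw [hqdef]; have := min_le_left (z - a) d; rw [← hδ] at this; linarith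
          · rw [hqdef]; linarith [hz.2]
        have hπq : 0 < κ → (z - q) * Real.sqrt κ < π := by
          intro hκ
          have hsp : 0 < Real.sqrt κ := Real.sqrt_pos.mpr hκ
          have h1 : z - q = δ := by rw [hqdef]; ring
          have h2 : δ ≤ d := min_le_right _ _
          rw [h1]
          nlinarith [hdκ' hκ]
        have hBpos : 0 < sinK κ (z - q) := sinK_pos (by linarith) hπq
        set g : ℝ → ℝ := fun w => u z * (sinK κ (w - q) / sinK κ (z - q)) with hg
        have hgc : ContinuousAt g z := by
          apply Continuous.continuousAt
          exact continuous_const.mul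
            (((sinK_continuous κ).comp (continuous_id.sub continuous_const)).div_const _)
        have hgz : g z = u z := by
          rw [hg]; simp only []
          rw [div_self hBpos.ne', mul_one]
        have hev1 : ∀ᶠ w in 𝓝 z, c < g w :=
          (hgc.tendsto).eventually_const_lt (by rw [hgz]; exact hc)
        filter_upwards [nhdsWithin_le_nhds hev1, nhdsWithin_le_nhds (Ioi_mem_nhds hqz),
          self_mem_nhdsWithin] with w h1 h2 h3
        exact lt_of_lt_of_le h1
          (bound_left hpos hconc hz hqm hqz hπq w ⟨h2, h3.2⟩)
    · -- from the right
      rcases eq_or_lt_of_le hz.2 with hbz | hbz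
      · filter_upwards [self_mem_nhdsWithin] with w hw
        have hwz : w = z := le_antisymm (hbz ▸ hw.1.2) hw.2
        rw [hwz]; exact hc
      · set δ := min (b - z) d with hδ
        have hδpos : 0 < δ := lt_min (by linarith) hdpos
        set p := z + δ with hpdef
        have hzp : z < p := by rw [hpdef]; linarith
        have hpm : p ∈ Set.Icc a b := by
          constructor
          · rw [hpdef]; linarith [hz.1]
          · rw [hpdef]; have := min_le_left (b - z) d; rw [← hδ] at this; linarith
        have hπp : 0 < κ → (p - z) * Real.sqrt κ < π := by
          intro hκ
          have hsp : 0 < Real.sqrt κ := Real.sqrt_pos.mpr hκ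
          have h1 : p - z = δ := by rw [hpdef]; ring
          have h2 : δ ≤ d := min_le_right _ _
          rw [h1]
          nlinarith [hdκ' hκ]
        have hApos : 0 < sinK κ (p - z) := sinK_pos (by linarith) hπp
        set f : ℝ → ℝ := fun w => u z * (sinK κ (p - w) / sinK κ (p - z)) with hf
        have hfc : ContinuousAt f z := by
          apply Continuous.continuousAt
          exact continuous_const.mul
            (((sinK_continuous κ).comp (continuous_const.sub continuous_id)).div_const _)
        have hfz : f z = u z := by
          rw [hf]; simp only []
          rw [div_self hApos.ne', mul_one]
        have hev1 : ∀ᶠ w in 𝓝 z, c < f w :=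
          (hfc.tendsto).eventually_const_lt (by rw [hfz]; exact hc)
        filter_upwards [nhdsWithin_le_nhds hev1, nhdsWithin_le_nhds (Iio_mem_nhds hzp),
          self_mem_nhdsWithin] with w h1 h2 h3
        exact lt_of_lt_of_le h1
          (bound_right hpos hconc hz hpm hzp hπp w ⟨h3.2, h2⟩)
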